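/- Let G be a group and let H, K be subgroups of G such that every element of G is a product h·k with h ∈ H and k ∈ K. Set L = H ⊓ K. Suppose that L is a normal subgroup of H and that the normal closure of L in K (the smallest normal subgroup of K containing L) equals K. Then the normal closure of L in G equals K; in particular, K is a normal subgroup of G. -/
import Mathlib


theorem normalClosure_inf_eq {G : Type*} [Group G] (H K : Subgroup G)
    (hprod : ∀ g : G, ∃ h ∈ H, ∃ k ∈ K, g = h * k)
    (hnormH : ((H ⊓ K).subgroupOf H).Normal)
    (hclosK : Subgroup.normalClosure (((H ⊓ K).subgroupOf K : Subgroup K) : Set K) = ⊤) :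
    Subgroup.normalClosure ((H ⊓ K : Subgroup G) : Set G) = K ∧ K.Normal := by
  set L := H ⊓ K with hL
  set N := Subgroup.normalClosure ((L : Subgroup G) : Set G) with hN
  -- L is normalized by H (as subgroups of G)
  have hHnorm : ∀ h ∈ H, ∀ x ∈ L, h * x * h⁻¹ ∈ L := by
    intro h hh x hx
    have hxH : x ∈ H := hx.1
    have := hnormH.conj_mem ⟨x, hxH⟩ (by exact hx) ⟨h, hh⟩
    simpa [Subgroup.mem_subgroupOf] using this
  -- every conjugate of an element of L lies in K
  have hconj : ∀ g : G, ∀ x ∈ L, g * x * g⁻¹ ∈ K := by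
    intro g x hx
    obtain ⟨h, hh, k, hk, hg⟩ := hprod g⁻¹
    have hginv : g = k⁻¹ * h⁻¹ := by
      have : g⁻¹⁻¹ = (h * k)⁻¹ := by rw [← hg]
      simpa [mul_comm] using this
    have h1 : h⁻¹ * x * h⁻¹⁻¹ ∈ L := hHnorm h⁻¹ (inv_mem hh) x hx
    have : g * x * g⁻¹ = k⁻¹ * (h⁻¹ * x * h⁻¹⁻¹) * k⁻¹⁻¹ := by
      rw [hginv]; group
    rw [this]
    exact mul_mem (mul_mem (inv_mem hk) h1.2) (by simpa using hk)
  -- N ≤ K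
  have hNK : N ≤ K := by
    rw [hN, Subgroup.normalClosure]
    refine (Subgroup.closure_le K).2 ?_
    · intro y hy
      rw [Group.mem_conjugatesOfSet_iff] at hy
      obtain ⟨x, hx, hc⟩ := hy
      obtain ⟨g, rfl⟩ := isConj_iff.mp hc
      exact hconj g x hx
  -- K ≤ N
  have hKN : K ≤ N := by
    have hnorm : (N.subgroupOf K).Normal :=
      (Subgroup.normalClosure_normal).subgroupOf K
    have hle : (((L : Subgroup G).subgroupOf K : Subgroup K) : Set K) ⊆
        (N.subgroupOf K : Subgroup K) := by
      intro x hx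
      exact Subgroup.subset_normalClosure hx
    have := Subgroup.normalClosure_le_normal hle
    rw [hclosK] at this
    intro k hk
    have hk' : (⟨k, hk⟩ : K) ∈ N.subgroupOf K := this (Subgroup.mem_top _)
    exact hk'
  have hEq : N = K := le_antisymm hNK hKN
  exact ⟨hEq, hEq ▸ Subgroup.normalClosure_normal⟩
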